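/- arXiv:2007.15734 — 2 statements merged into one kernel-verified Lean document; each statement's English description precedes it below -/
import Mathlib

section
/- For every nonnegative integer n there exists a constant C_n > 0 depending only on n such that for all nonzero complex z with nonnegative imaginary part and |z| ≤ C_n, one has |H_n'(z)/H_n(z)| ≤ 4(n+1)/|z|, where H_n is the Hankel function of the first kind of order n. -/
noncomputable def besselJnat (n : ℕ) (z : ℂ) : ℂ :=
  (z/2)^n * ∑' k : ℕ, (-1:ℂ)^k * (z^2/4)^k /
    ((Nat.factorial k : ℂ) * (Nat.factorial (n+k) : ℂ))

/-- Logarithm with branch cut along the negative imaginary axis. -/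
noncomputable def logCut (z : ℂ) : ℂ :=
  Complex.log (-Complex.I * z) + Complex.I * (Real.pi/2)

/-- Digamma function Ψ(z) = Γ'(z)/Γ(z). -/
noncomputable def digammaC (z : ℂ) : ℂ := deriv Complex.Gamma z / Complex.Gamma z

noncomputable def besselYnat (n : ℕ) (z : ℂ) : ℂ :=
  (2/(Real.pi:ℂ)) * logCut (z/2) * besselJnat n z
  - ((1:ℂ)/Real.pi) * (z/2)^(-(n:ℤ)) *
      ∑ k ∈ Finset.range n, ((Nat.factorial (n-1-k) : ℂ)/(Nat.factorial k : ℂ)) * (z^2/4)^k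
  - ((1:ℂ)/Real.pi) * (z/2)^n *
      ∑' k : ℕ, (digammaC ((k:ℂ)+1) + digammaC ((n:ℂ)+(k:ℂ)+1)) * (-(z^2)/4)^k /
        ((Nat.factorial k : ℂ)*(Nat.factorial (n+k) : ℂ))

noncomputable def besselJ (n : ℤ) (z : ℂ) : ℂ :=
  if 0 ≤ n then besselJnat n.toNat z else (-1:ℂ)^(n.natAbs) * besselJnat n.natAbs z

noncomputable def besselY (n : ℤ) (z : ℂ) : ℂ :=
  if 0 ≤ n then besselYnat n.toNat z else (-1:ℂ)^(n.natAbs) * besselYnat n.natAbs z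

/-- Hankel function of the first kind. -/
noncomputable def hankelH (n : ℤ) (z : ℂ) : ℂ := besselJ n z + Complex.I * besselY n z

/-!
Near `0` the Hankel function is dominated by one explicit term: for `n ≥ 1` the pole
`-(i/π) (n-1)! (z/2)⁻ⁿ`, up to a relative error `O(|z|)`, and for `n = 0` the logarithm
`(2i/π) log (|z|/2)`, up to an additive error `O(1)`. The power series in `z²/4` occurring in `Jₙ`
and `Yₙ` are majorised by `(n+2) 2ᵏ / k!`, since `ψ(k+1) = -γ + H_k` grows only linearly.
So `|Hₙ|` is comparable to its main term on the circle `|w - z| = r`, `r = |z|/(n+1)` (resp.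
`|z|/2`), which stays in the cut plane when `Im z ≥ 0`, and Cauchy's estimate
`|Hₙ'(z)| ≤ max |Hₙ| / r` concludes: on that circle `|Hₙ|` exceeds `|Hₙ(z)|` at most by the
factor `(11/9) (1 + 1/n)ⁿ < 4`, resp. `2` once `log (2/|z|)` is large.
-/

open Complex Metric Set Finset
open scoped Nat Real

section MajorizedPowerSeries

variable {c : ℕ → ℂ} {u : ℕ → ℝ} {w : ℂ}

lemma norm_mul_pow_le_of_norm_le {a : ℂ} {b : ℝ} (ha : ‖a‖ ≤ b) (hw : ‖w‖ ≤ 1) (k : ℕ) :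
    ‖a * w ^ k‖ ≤ b := by
  rw [norm_mul, norm_pow]
  exact (mul_le_of_le_one_right (norm_nonneg a) (pow_le_one₀ (norm_nonneg w) hw)).trans ha

lemma summable_mul_pow (hu : Summable u) (hc : ∀ k, ‖c k‖ ≤ u k) (hw : ‖w‖ ≤ 1) :
    Summable fun k ↦ c k * w ^ k :=
  hu.of_norm_bounded fun k ↦ norm_mul_pow_le_of_norm_le (hc k) hw k

lemma norm_tsum_mul_pow_le (hu : Summable u) (hc : ∀ k, ‖c k‖ ≤ u k) (hw : ‖w‖ ≤ 1) :
    ‖∑' k, c k * w ^ k‖ ≤ ∑' k, u k :=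
  tsum_of_norm_bounded hu.hasSum fun k ↦ norm_mul_pow_le_of_norm_le (hc k) hw k

lemma norm_tsum_mul_pow_sub_le (hu : Summable u) (hc : ∀ k, ‖c k‖ ≤ u k) (hw : ‖w‖ ≤ 1) :
    ‖(∑' k, c k * w ^ k) - c 0‖ ≤ ‖w‖ * ∑' k, u (k + 1) := by
  rw [(summable_mul_pow hu hc hw).tsum_eq_zero_add, pow_zero, mul_one, add_sub_cancel_left]
  simp_rw [pow_succ, ← mul_assoc]
  rw [tsum_mul_right, norm_mul, mul_comm]
  exact mul_le_mul_of_nonneg_left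
    (norm_tsum_mul_pow_le ((summable_nat_add_iff 1).2 hu) (fun k ↦ hc (k + 1)) hw) (norm_nonneg w)

lemma differentiableOn_tsum_mul_pow (hu : Summable u) (hc : ∀ k, ‖c k‖ ≤ u k) :
    DifferentiableOn ℂ (fun w ↦ ∑' k, c k * w ^ k) (ball 0 1) :=
  differentiableOn_tsum_of_summable_norm hu
    (fun k ↦ ((differentiable_const _).mul (differentiable_pow k)).differentiableOn) isOpen_ball
    fun k _ hw ↦ norm_mul_pow_le_of_norm_le (hc k) (mem_ball_zero_iff.1 hw).le k

lemma norm_sum_range_succ_mul_pow_sub_le (c : ℕ → ℂ) (m : ℕ) (hw : ‖w‖ ≤ 1) :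
    ‖∑ k ∈ range (m + 1), c k * w ^ k - c 0‖ ≤ ‖w‖ * ∑ k ∈ range m, ‖c (k + 1)‖ := by
  rw [sum_range_succ', pow_zero, mul_one, add_sub_cancel_right, mul_sum]
  refine (norm_sum_le _ _).trans (sum_le_sum fun k _ ↦ ?_)
  rw [pow_succ, ← mul_assoc, norm_mul, mul_comm]
  exact mul_le_mul_of_nonneg_left (norm_mul_pow_le_of_norm_le le_rfl hw k) (norm_nonneg w)

end MajorizedPowerSeries

lemma norm_deriv_div_le_of_forall_mem_sphere {f : ℂ → ℂ} {z : ℂ} {r m M : ℝ} (hr : 0 < r)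
    (hf : DifferentiableOn ℂ f (closedBall z r)) (hm : 0 < m) (hfz : m ≤ ‖f z‖)
    (hM : ∀ w ∈ sphere z r, ‖f w‖ ≤ M) :
    ‖deriv f z / f z‖ ≤ M / (m * r) := by
  have hd := norm_deriv_le_of_forall_mem_sphere_norm_le hr (hf.diffContOnCl_ball subset_rfl) hM
  rw [norm_div, mul_comm, ← div_div]
  exact div_le_div₀ ((norm_nonneg _).trans hd) hd hm hfz

lemma norm_sub_le_norm_and_norm_le_add_of_mem_sphere {E : Type*} [SeminormedAddCommGroup E]
    {z w : E} {r : ℝ} (hw : w ∈ sphere z r) : ‖z‖ - r ≤ ‖w‖ ∧ ‖w‖ ≤ ‖z‖ + r := by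
  have h := abs_norm_sub_norm_le w z
  rw [mem_sphere_iff_norm.1 hw, abs_le] at h
  constructor <;> linarith [h.1, h.2]

lemma pow_mul_one_add_inv_le (n : ℕ) {a : ℝ} (ha : 0 ≤ a) :
    (a * (1 + (n : ℝ)⁻¹)) ^ n ≤ 3 * a ^ n := by
  rw [mul_pow, mul_comm 3]
  exact mul_le_mul_of_nonneg_left
    (Real.one_add_inv_pow_le_exp.trans Real.exp_one_lt_three.le) (by positivity)

lemma harmonic_le_self (k : ℕ) : harmonic k ≤ k := by
  simpa [harmonic] using sum_le_card_nsmul (range k) (fun i : ℕ ↦ ((i + 1 : ℕ) : ℚ)⁻¹) 1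
    fun i _ ↦ inv_le_one_of_one_le₀ (by exact_mod_cast i.succ_pos)

lemma digammaC_nat_add_one (k : ℕ) :
    digammaC (k + 1) = ((-Real.eulerMascheroniConstant + harmonic k : ℝ) : ℂ) := by
  rw [digammaC, Complex.deriv_Gamma_nat, Gamma_nat_eq_factorial,
    mul_div_cancel_left₀ _ (mod_cast k.factorial_ne_zero)]
  push_cast
  rfl

lemma norm_digammaC_nat_add_one_le (k : ℕ) : ‖digammaC (k + 1)‖ ≤ k + 1 := by
  have hH : ((harmonic k : ℚ) : ℝ) ≤ k := by exact_mod_cast harmonic_le_self k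
  have hH₀ : (0 : ℝ) ≤ (harmonic k : ℚ) := by
    exact_mod_cast sum_nonneg fun i _ ↦ by positivity
  rw [digammaC_nat_add_one, Complex.norm_real, Real.norm_eq_abs, abs_le]
  constructor <;>
    linarith [Real.one_half_lt_eulerMascheroniConstant, Real.eulerMascheroniConstant_lt_two_thirds]

noncomputable def besselJCoeff (n k : ℕ) : ℂ := (-1) ^ k / (k ! * (n + k)! : ℂ)

noncomputable def besselYCoeff (n k : ℕ) : ℂ :=
  (digammaC (k + 1) + digammaC (n + k + 1)) / (k ! * (n + k)! : ℂ)

noncomputable def besselJSeries (n : ℕ) (v : ℂ) : ℂ := ∑' k, besselJCoeff n k * v ^ k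

noncomputable def besselYSeries (n : ℕ) (v : ℂ) : ℂ := ∑' k, besselYCoeff n k * v ^ k

noncomputable def besselYPoly (n : ℕ) (v : ℂ) : ℂ :=
  ∑ k ∈ range n, ((n - 1 - k)! / k ! : ℂ) * v ^ k

lemma summable_besselMajorant (n : ℕ) : Summable fun k ↦ (n + 2 : ℝ) * 2 ^ k / k ! := by
  simpa only [mul_div_assoc] using (Real.summable_pow_div_factorial 2).mul_left (n + 2 : ℝ)

lemma norm_besselJCoeff_le (n k : ℕ) : ‖besselJCoeff n k‖ ≤ (n + 2 : ℝ) * 2 ^ k / k ! := by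
  have h₁ : (1 : ℝ) ≤ (n + k)! := mod_cast (n + k).factorial_pos
  have h₂ : (1 : ℝ) ≤ (n + 2) * 2 ^ k := by
    nlinarith [one_le_pow₀ (M₀ := ℝ) (a := 2) one_le_two (n := k), (n.cast_nonneg : (0 : ℝ) ≤ n)]
  rw [besselJCoeff, norm_div, norm_pow, norm_neg, norm_one, one_pow, norm_mul,
    Complex.norm_natCast, Complex.norm_natCast]
  exact div_le_div₀ (by positivity) h₂ (by positivity) (le_mul_of_one_le_right (by positivity) h₁)

lemma norm_besselYCoeff_le (n k : ℕ) : ‖besselYCoeff n k‖ ≤ (n + 2 : ℝ) * 2 ^ k / k ! := by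
  have h₁ : (1 : ℝ) ≤ (n + k)! := mod_cast (n + k).factorial_pos
  have h₂ : (k + 1 : ℝ) ≤ 2 ^ k := mod_cast k.lt_two_pow_self
  have hψ : ‖digammaC (k + 1) + digammaC (n + k + 1)‖ ≤ (n + 2) * 2 ^ k := by
    have h := norm_digammaC_nat_add_one_le (n + k)
    push_cast at h
    nlinarith [norm_add_le (digammaC (k + 1)) (digammaC (n + k + 1)),
      norm_digammaC_nat_add_one_le k, (n.cast_nonneg : (0 : ℝ) ≤ n)]
  rw [besselYCoeff, norm_div, norm_mul, Complex.norm_natCast, Complex.norm_natCast]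
  exact div_le_div₀ (by positivity) hψ (by positivity) (le_mul_of_one_le_right (by positivity) h₁)

lemma norm_besselJSeries_le (n : ℕ) {v : ℂ} (hv : ‖v‖ ≤ 1) :
    ‖besselJSeries n v‖ ≤ ∑' k, (n + 2 : ℝ) * 2 ^ k / k ! :=
  norm_tsum_mul_pow_le (summable_besselMajorant n) (norm_besselJCoeff_le n) hv

lemma norm_besselYSeries_le (n : ℕ) {v : ℂ} (hv : ‖v‖ ≤ 1) :
    ‖besselYSeries n v‖ ≤ ∑' k, (n + 2 : ℝ) * 2 ^ k / k ! :=
  norm_tsum_mul_pow_le (summable_besselMajorant n) (norm_besselYCoeff_le n) hv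

lemma exists_norm_besselJSeries_zero_sub_one_le :
    ∃ C, 0 ≤ C ∧ ∀ v : ℂ, ‖v‖ ≤ 1 → ‖besselJSeries 0 v - 1‖ ≤ C * ‖v‖ := by
  refine ⟨∑' k, (0 + 2 : ℝ) * 2 ^ (k + 1) / (k + 1)!,
    tsum_nonneg fun k ↦ by positivity, fun v hv ↦ ?_⟩
  have h := norm_tsum_mul_pow_sub_le (summable_besselMajorant 0) (norm_besselJCoeff_le 0) hv
  rw [mul_comm]
  simpa [besselJSeries, besselJCoeff] using h

lemma exists_norm_besselYPoly_sub_le {n : ℕ} (hn : n ≠ 0) :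
    ∃ C, 0 ≤ C ∧ ∀ v : ℂ, ‖v‖ ≤ 1 → ‖besselYPoly n v - (n - 1)!‖ ≤ C * ‖v‖ := by
  obtain ⟨m, rfl⟩ := Nat.exists_eq_succ_of_ne_zero hn
  set c : ℕ → ℂ := fun k ↦ ((m + 1 - 1 - k)! / k ! : ℂ)
  refine ⟨∑ k ∈ range m, ‖c (k + 1)‖, sum_nonneg fun k _ ↦ norm_nonneg _, fun v hv ↦ ?_⟩
  rw [mul_comm]
  simpa [besselYPoly, c] using norm_sum_range_succ_mul_pow_sub_le c m hv

lemma norm_two_mul_I_div_pi_le_one : ‖2 * I / (π : ℂ)‖ ≤ 1 := by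
  rw [norm_div, norm_mul, Complex.norm_I, Complex.norm_real, Real.norm_of_nonneg Real.pi_pos.le,
    div_le_one Real.pi_pos, Complex.norm_ofNat, mul_one]
  exact Real.two_le_pi

lemma norm_I_div_pi_le_one : ‖I / (π : ℂ)‖ ≤ 1 := by
  rw [norm_div, Complex.norm_I, Complex.norm_real, Real.norm_of_nonneg Real.pi_pos.le,
    div_le_one Real.pi_pos]
  linarith [Real.two_le_pi]

lemma norm_two_mul_I_div_pi_mul_log {t : ℝ} (ht₀ : 0 ≤ t) (ht₁ : t ≤ 1) :
    ‖2 * I / π * Real.log t‖ = 2 / π * -Real.log t := by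
  rw [norm_mul, Complex.norm_real, Real.norm_eq_abs, abs_of_nonpos (Real.log_nonpos ht₀ ht₁),
    norm_div, norm_mul, Complex.norm_I, Complex.norm_real, Real.norm_of_nonneg Real.pi_pos.le,
    Complex.norm_ofNat, mul_one]

lemma norm_logCut_sub_log_norm_le (u : ℂ) : ‖logCut u - Real.log ‖u‖‖ ≤ 3 * π / 2 := by
  have hre : (logCut u - Real.log ‖u‖).re = 0 := by simp [logCut, Complex.log_re]
  have him : (logCut u - Real.log ‖u‖).im = arg (-I * u) + π / 2 := by
    simp [logCut, Complex.log_im]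
  refine (norm_le_abs_re_add_abs_im _).trans ?_
  rw [hre, him, abs_zero, zero_add]
  refine (abs_add_le _ _).trans ?_
  rw [abs_of_pos (by positivity : 0 < π / 2)]
  linarith [abs_arg_le_pi (-I * u)]

lemma norm_mul_norm_one_add_logCut_le {w : ℂ} (hw : ‖w‖ ≤ 1) :
    ‖w‖ * ‖1 + 2 * I / π * logCut (w / 2)‖ ≤ 8 := by
  have hlog : ‖w‖ * |Real.log (‖w‖ / 2)| ≤ 2 := by
    rcases (norm_nonneg w).eq_or_lt with h | h
    · simp [← h]
    have := Real.abs_log_mul_self_lt (‖w‖ / 2) (by positivity) (by linarith)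
    rw [abs_mul, abs_of_pos (by positivity : 0 < ‖w‖ / 2)] at this
    linarith
  have hcut : ‖logCut (w / 2)‖ ≤ |Real.log (‖w‖ / 2)| + 3 * π / 2 := by
    have h := norm_logCut_sub_log_norm_le (w / 2)
    rw [norm_div, Complex.norm_ofNat] at h
    have := norm_sub_norm_le (logCut (w / 2)) (Real.log (‖w‖ / 2))
    rw [Complex.norm_real, Real.norm_eq_abs] at this
    linarith
  have hfac : ‖1 + 2 * I / π * logCut (w / 2)‖ ≤ 1 + (|Real.log (‖w‖ / 2)| + 3 * π / 2) := by
    refine (norm_add_le _ _).trans ?_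
    rw [norm_one, norm_mul]
    gcongr
    exact (mul_le_of_le_one_left (norm_nonneg _) norm_two_mul_I_div_pi_le_one).trans hcut
  nlinarith [Real.pi_lt_d2, norm_nonneg w]

lemma besselJnat_eq (n : ℕ) (z : ℂ) :
    besselJnat n z = (z / 2) ^ n * besselJSeries n (z ^ 2 / 4) := by
  rw [besselJnat, besselJSeries]
  congr 1
  exact tsum_congr fun k ↦ by rw [besselJCoeff]; ring

lemma hankelH_natCast_eq (n : ℕ) (z : ℂ) :
    hankelH n z = (z / 2) ^ n * besselJSeries n (z ^ 2 / 4) * (1 + 2 * I / π * logCut (z / 2))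
      - I / π * ((z / 2) ^ (-(n : ℤ)) * besselYPoly n (z ^ 2 / 4)
        + (z / 2) ^ n * besselYSeries n (-(z ^ 2) / 4)) := by
  have hY : ∑' k : ℕ, (digammaC (k + 1) + digammaC (n + k + 1)) * (-(z ^ 2) / 4) ^ k
      / (k ! * (n + k)! : ℂ) = besselYSeries n (-(z ^ 2) / 4) :=
    tsum_congr fun k ↦ by rw [besselYCoeff]; ring
  simp only [hankelH, besselJ, besselY, Int.natCast_nonneg, if_true, Int.toNat_natCast,
    besselYnat, hY, besselJnat_eq, besselYPoly]
  ring

lemma norm_mul_norm_besselJSeries_mul_sub_le (n : ℕ) {w : ℂ} (hw : ‖w‖ ≤ 1) :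
    ‖w‖ * ‖besselJSeries n (w ^ 2 / 4) * (1 + 2 * I / π * logCut (w / 2))
      - I / π * besselYSeries n (-(w ^ 2) / 4)‖ ≤ 9 * ∑' k, (n + 2 : ℝ) * 2 ^ k / k ! := by
  have hv : ‖w ^ 2 / 4‖ ≤ 1 := by
    rw [norm_div, norm_pow, Complex.norm_ofNat]
    nlinarith [norm_nonneg w]
  have hv' : ‖-(w ^ 2) / 4‖ ≤ 1 := by rwa [neg_div, norm_neg]
  have hY : ‖I / π * besselYSeries n (-(w ^ 2) / 4)‖ ≤ ∑' k, (n + 2 : ℝ) * 2 ^ k / k ! := by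
    rw [norm_mul]
    exact (mul_le_of_le_one_left (norm_nonneg _) norm_I_div_pi_le_one).trans
      (norm_besselYSeries_le n hv')
  calc _ ≤ ‖w‖ * (‖besselJSeries n (w ^ 2 / 4)‖ * ‖1 + 2 * I / π * logCut (w / 2)‖
          + ‖I / π * besselYSeries n (-(w ^ 2) / 4)‖) := by
        gcongr
        exact (norm_sub_le _ _).trans_eq (by rw [norm_mul])
    _ = ‖besselJSeries n (w ^ 2 / 4)‖ * (‖w‖ * ‖1 + 2 * I / π * logCut (w / 2)‖)
          + ‖w‖ * ‖I / π * besselYSeries n (-(w ^ 2) / 4)‖ := by ring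
    _ ≤ (∑' k, (n + 2 : ℝ) * 2 ^ k / k !) * 8 + 1 * ∑' k, (n + 2 : ℝ) * 2 ^ k / k ! := by
        gcongr
        exacts [norm_besselJSeries_le n hv, norm_mul_norm_one_add_logCut_le hw]
    _ = _ := by ring

lemma exists_norm_pow_mul_hankelH_add_le {n : ℕ} (hn : n ≠ 0) :
    ∃ C, 0 ≤ C ∧ ∀ w : ℂ, w ≠ 0 → ‖w‖ ≤ 1 →
      ‖(w / 2) ^ n * hankelH n w + I / π * (n - 1)!‖ ≤ C * ‖w‖ := by
  obtain ⟨C, hC, hP⟩ := exists_norm_besselYPoly_sub_le hn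
  set M := ∑' k, (n + 2 : ℝ) * 2 ^ k / (k !)
  have hM : 0 ≤ M := tsum_nonneg fun k ↦ by positivity
  refine ⟨3 * M + C, by positivity, fun w hw₀ hw ↦ ?_⟩
  set q := (w / 2) ^ n
  set R := besselJSeries n (w ^ 2 / 4) * (1 + 2 * I / π * logCut (w / 2))
    - I / π * besselYSeries n (-(w ^ 2) / 4)
  have hq : ‖q‖ ≤ ‖w‖ / 2 := by
    rw [norm_pow, norm_div, Complex.norm_ofNat]
    exact pow_le_of_le_one (by positivity) (by linarith) hn
  have hv : ‖w ^ 2 / 4‖ ≤ ‖w‖ / 4 := by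
    rw [norm_div, norm_pow, Complex.norm_ofNat]
    nlinarith [norm_nonneg w]
  have hqq : q * (w / 2) ^ (-(n : ℤ)) = 1 := by
    rw [zpow_neg, zpow_natCast]
    exact mul_inv_cancel₀ (pow_ne_zero _ (div_ne_zero hw₀ two_ne_zero))
  have hsplit : (w / 2) ^ n * hankelH n w + I / π * (n - 1)!
      = q * q * R - I / π * (besselYPoly n (w ^ 2 / 4) - (n - 1)!) := by
    rw [hankelH_natCast_eq]
    linear_combination (-(I / π) * besselYPoly n (w ^ 2 / 4)) * hqq
  have hR : ‖q * q * R‖ ≤ 3 * M * ‖w‖ :=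
    calc ‖q * q * R‖ ≤ ‖w‖ / 2 * (‖w‖ / 2) * ‖R‖ := by
          rw [norm_mul, norm_mul]; gcongr
      _ = ‖w‖ / 4 * (‖w‖ * ‖R‖) := by ring
      _ ≤ ‖w‖ / 4 * (9 * M) :=
          mul_le_mul_of_nonneg_left (norm_mul_norm_besselJSeries_mul_sub_le n hw) (by positivity)
      _ ≤ 3 * M * ‖w‖ := by nlinarith [norm_nonneg w]
  have hpoly : ‖I / π * (besselYPoly n (w ^ 2 / 4) - (n - 1)!)‖ ≤ C * ‖w‖ := by
    rw [norm_mul]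
    refine (mul_le_of_le_one_left (norm_nonneg _) norm_I_div_pi_le_one).trans
      ((hP _ (by linarith)).trans ?_)
    nlinarith [norm_nonneg w]
  rw [hsplit, add_mul]
  exact (norm_sub_le _ _).trans (add_le_add hR hpoly)

lemma exists_norm_hankelH_zero_sub_log_le :
    ∃ C, ∀ w : ℂ, ‖w‖ ≤ 1 → ‖hankelH 0 w - 2 * I / π * Real.log (‖w‖ / 2)‖ ≤ C := by
  obtain ⟨C, hC, hJ⟩ := exists_norm_besselJSeries_zero_sub_one_le
  set M := ∑' k, (((0 : ℕ) : ℝ) + 2) * 2 ^ k / (k !)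
  refine ⟨2 * C + 6 + M, fun w hw ↦ ?_⟩
  set ℓ := 1 + 2 * I / π * logCut (w / 2)
  set v := w ^ 2 / 4
  have hv : ‖v‖ ≤ ‖w‖ / 4 := by
    rw [norm_div, norm_pow, Complex.norm_ofNat]
    nlinarith [norm_nonneg w]
  have hv' : ‖-(w ^ 2) / 4‖ ≤ 1 := by rw [neg_div, norm_neg]; linarith
  have hsplit : hankelH 0 w - 2 * I / π * Real.log (‖w‖ / 2)
      = (besselJSeries 0 v - 1) * ℓ + 1 + 2 * I / π * (logCut (w / 2) - Real.log ‖w / 2‖)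
        - I / π * besselYSeries 0 (-(w ^ 2) / 4) := by
    rw [← Nat.cast_zero, hankelH_natCast_eq, norm_div, Complex.norm_ofNat]
    simp [besselYPoly]
    ring
  have hJℓ : ‖(besselJSeries 0 v - 1) * ℓ‖ ≤ 2 * C := by
    have hℓ : ‖w‖ * ‖ℓ‖ ≤ 8 := norm_mul_norm_one_add_logCut_le hw
    rw [norm_mul]
    calc ‖besselJSeries 0 v - 1‖ * ‖ℓ‖ ≤ C * (‖w‖ / 4) * ‖ℓ‖ := by
          gcongr
          exact (hJ v (by linarith)).trans (by gcongr)
      _ = C / 4 * (‖w‖ * ‖ℓ‖) := by ring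
      _ ≤ 2 * C := by nlinarith
  have hlog : ‖2 * I / π * (logCut (w / 2) - Real.log ‖w / 2‖)‖ ≤ 5 := by
    rw [norm_mul]
    refine (mul_le_of_le_one_left (norm_nonneg _) norm_two_mul_I_div_pi_le_one).trans
      ((norm_logCut_sub_log_norm_le _).trans ?_)
    linarith [Real.pi_lt_d2]
  have hY : ‖I / π * besselYSeries 0 (-(w ^ 2) / 4)‖ ≤ M := by
    rw [norm_mul]
    exact (mul_le_of_le_one_left (norm_nonneg _) norm_I_div_pi_le_one).trans
      (norm_besselYSeries_le 0 hv')
  rw [hsplit]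
  refine (norm_sub_le _ _).trans (add_le_add ((norm_add_le _ _).trans (add_le_add
    ((norm_add_le _ _).trans (add_le_add hJℓ norm_one.le)) hlog)) hY) |>.trans_eq ?_
  ring

lemma exists_abs_norm_hankelH_zero_sub_le :
    ∃ C, 0 ≤ C ∧ ∀ w : ℂ, ‖w‖ ≤ 1 → |‖hankelH 0 w‖ - 2 / π * -Real.log (‖w‖ / 2)| ≤ C := by
  obtain ⟨C, hC⟩ := exists_norm_hankelH_zero_sub_log_le
  refine ⟨C, (norm_nonneg _).trans (hC 0 (by simp)), fun w hw ↦ ?_⟩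
  rw [← norm_two_mul_I_div_pi_mul_log (by positivity) (by linarith)]
  exact (abs_norm_sub_norm_le _ _).trans (hC w hw)

lemma closedBall_subset_slit {z : ℂ} {r : ℝ} (hz : 0 ≤ z.im) (hr : r < ‖z‖) :
    closedBall z r ⊆ {w | -I * (w / 2) ∈ slitPlane} := by
  intro w hw
  have hdist : ‖w - z‖ < ‖z‖ := (mem_closedBall_iff_norm.1 hw).trans_lt hr
  have hre : (-I * (w / 2)).re = w.im / 2 := by simp [Complex.div_ofNat_re]
  have him : (-I * (w / 2)).im = -(w.re / 2) := by simp [Complex.div_ofNat_im]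
  rw [mem_ofPred_eq, mem_slitPlane_iff, hre, him]
  by_contra! h
  have hwre : w.re = 0 := by linarith [h.2]
  have hwim : 0 ≤ -w.im := by linarith [h.1]
  have hlt : ‖w - z‖ ^ 2 < ‖z‖ ^ 2 := pow_lt_pow_left₀ hdist (norm_nonneg _) two_ne_zero
  rw [Complex.sq_norm, Complex.sq_norm, normSq_apply, normSq_apply, sub_re, sub_im, hwre] at hlt
  nlinarith [mul_nonneg hwim hz]

/-- `{w | -I * (w / 2) ∈ slitPlane}` is the plane cut along the closed negative imaginary axis,
where `logCut (w / 2)` is holomorphic. -/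
lemma differentiableOn_hankelH (n : ℕ) :
    DifferentiableOn ℂ (hankelH n) (ball 0 1 ∩ {w | -I * (w / 2) ∈ slitPlane}) := by
  rintro z ⟨hz₁, hz⟩
  refine DifferentiableAt.differentiableWithinAt ?_
  have hz₀ : z / 2 ≠ 0 := by rintro h; simp [h] at hz
  have hsq : ‖z ^ 2 / 4‖ < 1 := by
    rw [mem_ball_zero_iff] at hz₁
    rw [norm_div, norm_pow, Complex.norm_ofNat]
    nlinarith [norm_nonneg z]
  have hJ : DifferentiableAt ℂ (besselJSeries n) (z ^ 2 / 4) :=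
    (differentiableOn_tsum_mul_pow (summable_besselMajorant n)
      (norm_besselJCoeff_le n)).differentiableAt (isOpen_ball.mem_nhds (mem_ball_zero_iff.2 hsq))
  have hY : DifferentiableAt ℂ (besselYSeries n) (-(z ^ 2) / 4) :=
    (differentiableOn_tsum_mul_pow (summable_besselMajorant n)
      (norm_besselYCoeff_le n)).differentiableAt
        (isOpen_ball.mem_nhds (by rwa [mem_ball_zero_iff, neg_div, norm_neg]))
  have hlog : DifferentiableAt ℂ (fun w : ℂ ↦ logCut (w / 2)) z :=
    ((by fun_prop : DifferentiableAt ℂ (fun w : ℂ ↦ -I * (w / 2)) z).clog hz).add_const _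
  have hP : DifferentiableAt ℂ (fun w : ℂ ↦ besselYPoly n (w ^ 2 / 4)) z := by
    unfold besselYPoly; fun_prop
  have hzpow : DifferentiableAt ℂ (fun w : ℂ ↦ (w / 2) ^ (-(n : ℤ))) z :=
    (differentiableAt_id.div_const 2).zpow (Or.inl hz₀)
  rw [funext (hankelH_natCast_eq n)]
  fun_prop

lemma differentiableOn_closedBall_hankelH (n : ℕ) {z : ℂ} {r : ℝ} (hz : 0 ≤ z.im)
    (hr : r < ‖z‖) (hr₁ : ‖z‖ + r < 1) : DifferentiableOn ℂ (hankelH n) (closedBall z r) :=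
  (differentiableOn_hankelH n).mono fun _ hw ↦
    ⟨closedBall_subset_ball' (by rwa [dist_zero_right, add_comm]) hw,
      closedBall_subset_slit hz hr hw⟩

lemma exists_norm_pow_mul_norm_hankelH_mem {n : ℕ} (hn : n ≠ 0) :
    ∃ δ > 0, δ ≤ 1 ∧ ∀ w : ℂ, w ≠ 0 → ‖w‖ ≤ δ →
      9 / 10 * ((n - 1)! / π) ≤ (‖w‖ / 2) ^ n * ‖hankelH n w‖ ∧
        (‖w‖ / 2) ^ n * ‖hankelH n w‖ ≤ 11 / 10 * ((n - 1)! / π) := by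
  obtain ⟨C, hC, hH⟩ := exists_norm_pow_mul_hankelH_add_le hn
  set K := ((n - 1)! / π : ℝ)
  have hK : 0 < K := by positivity
  have ha : ‖I / π * (n - 1)!‖ = K := by
    rw [norm_mul, norm_div, Complex.norm_I, Complex.norm_real, Real.norm_of_nonneg Real.pi_pos.le,
      Complex.norm_natCast]
    ring
  refine ⟨min 1 (K / (10 * (C + 1))), by positivity, min_le_left _ _, fun w hw₀ hw ↦ ?_⟩
  have hCw : C * ‖w‖ ≤ K / 10 := by
    have := hw.trans (min_le_right _ _)
    rw [le_div_iff₀ (by positivity)] at this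
    nlinarith [norm_nonneg w]
  have h := hH w hw₀ (hw.trans (min_le_left _ _))
  have hpow : ‖(w / 2) ^ n * hankelH n w‖ = (‖w‖ / 2) ^ n * ‖hankelH n w‖ := by
    rw [norm_mul, norm_pow, norm_div, Complex.norm_ofNat]
  have h₁ := norm_sub_norm_le (I / π * (n - 1)!) (-((w / 2) ^ n * hankelH n w))
  have h₂ := norm_add_le ((w / 2) ^ n * hankelH n w + I / π * (n - 1)!) (-(I / π * (n - 1)!))
  rw [norm_neg, sub_neg_eq_add, add_comm, hpow, ha] at h₁
  rw [norm_neg, add_neg_cancel_right, hpow, ha] at h₂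
  constructor <;> linarith

lemma hankelH_log_deriv_near_zero_of_ne_zero {n : ℕ} (hn : n ≠ 0) :
    ∃ C > 0, ∀ z : ℂ, z ≠ 0 → 0 ≤ z.im → ‖z‖ ≤ C →
      ‖deriv (hankelH n) z / hankelH n z‖ ≤ 4 * (n + 1) / ‖z‖ := by
  obtain ⟨δ, hδ, hδ₁, hH⟩ := exists_norm_pow_mul_norm_hankelH_mem hn
  set K := ((n - 1)! / π : ℝ)
  have hK : 0 < K := by positivity
  refine ⟨δ / 2, by positivity, fun z hz₀ hz hzδ ↦ ?_⟩
  set x := ‖z‖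
  have hx : 0 < x := norm_pos_iff.2 hz₀
  have hn₁ : (1 : ℝ) ≤ n := Nat.one_le_cast.2 (Nat.one_le_iff_ne_zero.2 hn)
  set r := x / (n + 1)
  have hr : 0 < r := by positivity
  have hrx : r ≤ x / 2 := div_le_div_of_nonneg_left hx.le two_pos (by linarith)
  have hrn : r * (n + 1) = x := by simp only [r]; field_simp
  set p := (x / 2) ^ n
  have hp : 0 < p := by positivity
  have hsphere : ∀ w ∈ sphere z r, ‖hankelH n w‖ ≤ 33 / 10 * K / p := by
    intro w hw
    obtain ⟨hw₁, hw₂⟩ := norm_sub_le_norm_and_norm_le_add_of_mem_sphere hw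
    have hw₀ : 0 < ‖w‖ := by linarith
    have hpw : p ≤ 3 * (‖w‖ / 2) ^ n := by
      have hxr : x / 2 = (x - r) / 2 * (1 + (n : ℝ)⁻¹) := by simp only [r]; field_simp; ring
      show (x / 2) ^ n ≤ _
      rw [hxr]
      refine (pow_mul_one_add_inv_le n (by linarith)).trans ?_
      gcongr
      linarith
    have := (hH w (norm_pos_iff.1 hw₀) (by linarith)).2
    rw [le_div_iff₀ hp]
    nlinarith [norm_nonneg (hankelH n w)]
  refine (norm_deriv_div_le_of_forall_mem_sphere (m := 9 / 10 * K / p) hr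
    (differentiableOn_closedBall_hankelH n hz (by linarith) (by linarith)) (by positivity)
    ?_ hsphere).trans ?_
  · rw [div_le_iff₀ hp]; linarith [(hH z hz₀ (by linarith)).1]
  · rw [div_le_div_iff₀ (by positivity) hx]
    field_simp
    nlinarith

lemma hankelH_zero_log_deriv_near_zero :
    ∃ C > 0, ∀ z : ℂ, z ≠ 0 → 0 ≤ z.im → ‖z‖ ≤ C →
      ‖deriv (hankelH 0) z / hankelH 0 z‖ ≤ 4 / ‖z‖ := by
  obtain ⟨C, hC₀, hdev⟩ := exists_abs_norm_hankelH_zero_sub_le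
  set u := π / 2 * (3 * C + 1)
  refine ⟨min (1 / 2) (2 * Real.exp (-u)), by positivity, fun z hz₀ hz hzδ ↦ ?_⟩
  set x := ‖z‖
  have hx : 0 < x := norm_pos_iff.2 hz₀
  have hx₁ : x ≤ 1 / 2 := hzδ.trans (min_le_left _ _)
  set L := -Real.log (x / 2)
  have hLu : 3 * C + 1 ≤ 2 / π * L := by
    have h := Real.log_le_log (by positivity) (show x / 2 ≤ Real.exp (-u) by
      linarith [min_le_right (1 / 2) (2 * Real.exp (-u))])
    rw [Real.log_exp] at h
    have : 2 / π * u = 3 * C + 1 := by simp only [u]; field_simp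
    have : 2 / π * u ≤ 2 / π * L := by gcongr; linarith
    linarith
  have hsphere : ∀ w ∈ sphere z (x / 2), ‖hankelH 0 w‖ ≤ 2 / π * L + 1 + C := by
    intro w hw
    obtain ⟨hw₁, hw₂⟩ := norm_sub_le_norm_and_norm_le_add_of_mem_sphere hw
    have hlog : -Real.log (‖w‖ / 2) ≤ L + 1 := by
      have h := Real.log_le_log (by positivity) (show x / 4 ≤ ‖w‖ / 2 by linarith)
      have h2 : Real.log (x / 4) = Real.log (x / 2) - Real.log 2 := by
        rw [← Real.log_div (by positivity) two_ne_zero]; ring_nf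
      linarith [Real.log_two_lt_d9]
    have h2π : 2 / π * -Real.log (‖w‖ / 2) ≤ 2 / π * L + 1 := by
      have : 2 / π * (L + 1) ≤ 2 / π * L + 1 := by
        rw [mul_add, mul_one]; gcongr; rw [div_le_one Real.pi_pos]; exact Real.two_le_pi
      exact (mul_le_mul_of_nonneg_left hlog (by positivity)).trans this
    linarith [(abs_le.1 (hdev w (by linarith))).2]
  have hz_low : 2 / π * L - C ≤ ‖hankelH 0 z‖ := by
    linarith [(abs_le.1 (hdev z (by linarith))).1]
  refine (norm_deriv_div_le_of_forall_mem_sphere (by positivity)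
    (differentiableOn_closedBall_hankelH 0 hz (by linarith) (by linarith)) (by linarith)
    hz_low hsphere).trans ?_
  rw [div_le_div_iff₀ (by nlinarith) hx]
  nlinarith

/-- For every nonnegative integer `n` there is `Cₙ > 0` such that for all nonzero `z` in the
closed upper half-plane with `|z| ≤ Cₙ`, `|Hₙ'(z)/Hₙ(z)| ≤ 4(n+1)/|z|`. -/
theorem hankel_log_deriv_near_zero (n : ℕ) :
    ∃ C > 0, ∀ z : ℂ, z ≠ 0 → 0 ≤ z.im → ‖z‖ ≤ C →
      ‖deriv (hankelH n) z / hankelH n z‖ ≤ 4*(n+1)/‖z‖ := by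
  rcases eq_or_ne n 0 with rfl | hn
  · simpa using hankelH_zero_log_deriv_near_zero
  · exact hankelH_log_deriv_near_zero_of_ne_zero hn
end

section
/- Suppose k = iκ with κ > 0 real, and u : (0,∞) → ℝ is a nontrivial real solution of u'' + (1/r)u' - κ^2(1+q(r))u - (n^2/r^2)u = 0 decaying at infinity such that integration by parts is justified. Then r u(r) u'(r) = -∫_r^∞ [x(u'(x))^2 + (κ^2(1+q(x)) + n^2/x^2) x u(x)^2] dx for all r > 0, and hence u(r) ≠ 0 for all r > 0. -/
/-!
Write the equation as `u'' + u'/r = V u` with `V = κ²(1 + q) + n²/r² > 0`. Differentiating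
`r u u'` along it gives the integrand `r u'² + V r u²`, so the decay of `r u u'` yields the
identity. If `u(r) = 0`, the integral of this positive-definite integrand over `(r, ∞)` vanishes,
so `u ≡ u' ≡ 0` on `(r, ∞)`. The energy `u² + u'²` satisfies a backward Grönwall inequality on
compact subintervals of `(0, ∞)`, so then `u ≡ 0` on all of `(0, ∞)`, contradicting
nontriviality.
-/

open MeasureTheory Set Filter Real

theorem IsOpen.eqOn_zero_of_setIntegral_eq_zero {X : Type*} [TopologicalSpace X]
    [MeasurableSpace X] [OpensMeasurableSpace X] {μ : Measure X} [μ.IsOpenPosMeasure]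
    {s : Set X} {g : X → ℝ} (hs : IsOpen s) (hg : ContinuousOn g s)
    (hg₀ : ∀ x ∈ s, 0 ≤ g x) (hint : IntegrableOn g s μ) (h : ∫ x in s, g x ∂μ = 0) :
    EqOn g 0 s :=
  Measure.eqOn_open_of_ae_eq ((setIntegral_eq_zero_iff_of_nonneg_ae
    (ae_restrict_of_forall_mem hs.measurableSet hg₀) hint).1 h) hs hg continuousOn_const

theorem le_exp_mul_of_neg_mul_le_deriv {E E' : ℝ → ℝ} {K a b : ℝ} (hab : a ≤ b)
    (hE : ContinuousOn E (Icc a b)) (hE' : ∀ t ∈ Ioo a b, HasDerivAt E (E' t) t)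
    (hbound : ∀ t ∈ Ioo a b, -(K * E t) ≤ E' t) : E a ≤ exp (K * (b - a)) * E b := by
  have hmono : MonotoneOn (fun t => exp (K * t) * E t) (Icc a b) := by
    refine monotoneOn_of_hasDerivWithinAt_nonneg (convex_Icc a b)
      ((continuous_exp.comp (continuous_const_mul K)).continuousOn.mul hE)
      (f' := fun t => exp (K * t) * (K * E t + E' t)) ?_ ?_
    · rw [interior_Icc]
      intro t ht
      have hexp := ((hasDerivAt_id' t).const_mul K).exp
      exact ((hexp.mul (hE' t ht)).congr_deriv (by ring)).hasDerivWithinAt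
    · rw [interior_Icc]
      intro t ht
      exact mul_nonneg (exp_pos _).le (by linarith [hbound t ht])
  have h := hmono (left_mem_Icc.2 hab) (right_mem_Icc.2 hab) hab
  calc E a = exp (-(K * a)) * (exp (K * a) * E a) := by
        rw [← mul_assoc, ← exp_add, neg_add_cancel, exp_zero, one_mul]
    _ ≤ exp (-(K * a)) * (exp (K * b) * E b) := mul_le_mul_of_nonneg_left h (exp_pos _).le
    _ = exp (K * (b - a)) * E b := by rw [← mul_assoc, ← exp_add]; ring_nf

def SolvesRadialEq (V u : ℝ → ℝ) : Prop :=
  ∀ r > 0, DifferentiableAt ℝ u r ∧ DifferentiableAt ℝ (deriv u) r ∧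
    deriv (deriv u) r = V r * u r - deriv u r / r

namespace SolvesRadialEq

variable {V u : ℝ → ℝ}

theorem continuousOn (hsol : SolvesRadialEq V u) : ContinuousOn u (Ioi 0) :=
  fun r hr => (hsol r hr).1.continuousAt.continuousWithinAt

theorem continuousOn_deriv (hsol : SolvesRadialEq V u) : ContinuousOn (deriv u) (Ioi 0) :=
  fun r hr => (hsol r hr).2.1.continuousAt.continuousWithinAt

theorem hasDerivAt_mul_mul_deriv (hsol : SolvesRadialEq V u) {r : ℝ} (hr : 0 < r) :
    HasDerivAt (fun x => x * u x * deriv u x) (r * deriv u r ^ 2 + V r * r * u r ^ 2) r := by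
  obtain ⟨hu, hu', hode⟩ := hsol r hr
  refine (((hasDerivAt_id' r).mul hu.hasDerivAt).mul hu'.hasDerivAt).congr_deriv ?_
  rw [hode, Pi.mul_apply]
  field_simp
  ring

theorem mul_mul_deriv_eq_neg_integral_Ioi (hsol : SolvesRadialEq V u) {r : ℝ} (hr : 0 < r)
    (hint : IntegrableOn (fun x => x * deriv u x ^ 2 + V x * x * u x ^ 2) (Ioi r))
    (hdecay : Tendsto (fun x => x * u x * deriv u x) atTop (nhds 0)) :
    r * u r * deriv u r = -∫ x in Ioi r, (x * deriv u x ^ 2 + V x * x * u x ^ 2) := by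
  rw [integral_Ioi_of_hasDerivAt_of_tendsto'
    (fun x hx => hsol.hasDerivAt_mul_mul_deriv (hr.trans_le hx)) hint hdecay]
  ring

theorem eq_zero_of_lt (hsol : SolvesRadialEq V u) (hV : ContinuousOn V (Ioi 0))
    (hVpos : ∀ x > 0, 0 < V x) {r : ℝ} (hr : 0 < r)
    (hint : IntegrableOn (fun x => x * deriv u x ^ 2 + V x * x * u x ^ 2) (Ioi r))
    (hdecay : Tendsto (fun x => x * u x * deriv u x) atTop (nhds 0)) (hur : u r = 0)
    {x : ℝ} (hx : r < x) : u x = 0 ∧ deriv u x = 0 := by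
  have hsub : Ioi r ⊆ Ioi 0 := Ioi_subset_Ioi hr.le
  have hg : ContinuousOn (fun x => x * deriv u x ^ 2 + V x * x * u x ^ 2) (Ioi r) :=
    ((continuousOn_id.mul (hsol.continuousOn_deriv.pow 2)).add
      ((hV.mul continuousOn_id).mul (hsol.continuousOn.pow 2))).mono hsub
  have hzero : ∫ x in Ioi r, (x * deriv u x ^ 2 + V x * x * u x ^ 2) = 0 := by
    simpa [hur] using (hsol.mul_mul_deriv_eq_neg_integral_Ioi hr hint hdecay).symm
  have hx₀ : 0 < x := hr.trans hx
  have hVx := hVpos x hx₀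
  have hg₀ : ∀ y ∈ Ioi r, 0 ≤ y * deriv u y ^ 2 + V y * y * u y ^ 2 := fun y hy => by
    have hy₀ : 0 < y := hr.trans hy
    have := hVpos y hy₀
    positivity
  have hgx := isOpen_Ioi.eqOn_zero_of_setIntegral_eq_zero hg hg₀ hint hzero hx
  simp only [Pi.zero_apply] at hgx
  have h₁ : 0 ≤ x * deriv u x ^ 2 := by positivity
  have h₂ : 0 ≤ V x * x * u x ^ 2 := by positivity
  constructor
  · have : V x * x * u x ^ 2 = 0 := by linarith
    simpa [hVx.ne', hx₀.ne'] using this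
  · have : x * deriv u x ^ 2 = 0 := by linarith
    simpa [hx₀.ne'] using this

theorem hasDerivAt_energy (hsol : SolvesRadialEq V u) {t : ℝ} (ht : 0 < t) :
    HasDerivAt (fun x => deriv u x ^ 2 + u x ^ 2)
      (2 * deriv u t * deriv (deriv u) t + 2 * u t * deriv u t) t := by
  refine (((hsol t ht).2.1.hasDerivAt.pow 2).add ((hsol t ht).1.hasDerivAt.pow 2)).congr_deriv ?_
  ring

theorem neg_mul_energy_le_deriv (hsol : SolvesRadialEq V u) {t : ℝ} (ht : 0 < t) :
    -((2 / t + |V t + 1|) * (deriv u t ^ 2 + u t ^ 2))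
      ≤ 2 * deriv u t * deriv (deriv u) t + 2 * u t * deriv u t := by
  have hamgm : |2 * (u t * deriv u t)| ≤ deriv u t ^ 2 + u t ^ 2 :=
    abs_le.2 ⟨by nlinarith [sq_nonneg (u t + deriv u t)],
      by nlinarith [sq_nonneg (u t - deriv u t)]⟩
  have hcross : -(|V t + 1| * (deriv u t ^ 2 + u t ^ 2)) ≤ (V t + 1) * (2 * (u t * deriv u t)) :=
    calc _ ≤ -(|V t + 1| * |2 * (u t * deriv u t)|) :=
          neg_le_neg (mul_le_mul_of_nonneg_left hamgm (abs_nonneg _))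
      _ = -|(V t + 1) * (2 * (u t * deriv u t))| := by rw [abs_mul (V t + 1)]
      _ ≤ _ := neg_abs_le _
  have hu₀ : 0 ≤ 2 / t * u t ^ 2 := by positivity
  rw [(hsol t ht).2.2]
  linear_combination hcross + hu₀

theorem eq_zero_of_eq_zero_of_deriv_eq_zero (hsol : SolvesRadialEq V u)
    (hV : ContinuousOn V (Ioi 0)) {a b : ℝ} (ha : 0 < a) (hab : a ≤ b)
    (hub : u b = 0) (hub' : deriv u b = 0) : u a = 0 := by
  have hsub : Icc a b ⊆ Ioi 0 := fun t ht => ha.trans_le ht.1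
  obtain ⟨B, hB⟩ := isCompact_Icc.exists_bound_of_continuousOn
    ((hV.mono hsub).add (continuousOn_const (c := (1 : ℝ))))
  have hbound : ∀ t ∈ Ioo a b, -((2 / a + B) * (deriv u t ^ 2 + u t ^ 2))
      ≤ 2 * deriv u t * deriv (deriv u) t + 2 * u t * deriv u t := fun t ht => by
    have hK : 2 / t + |V t + 1| ≤ 2 / a + B :=
      add_le_add (div_le_div_of_nonneg_left zero_le_two ha ht.1.le) (hB t (Ioo_subset_Icc_self ht))
    have hE₀ : 0 ≤ deriv u t ^ 2 + u t ^ 2 := by positivity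
    linarith [hsol.neg_mul_energy_le_deriv (ha.trans ht.1), mul_le_mul_of_nonneg_right hK hE₀]
  have hE := le_exp_mul_of_neg_mul_le_deriv (E := fun x => deriv u x ^ 2 + u x ^ 2) hab
    (((hsol.continuousOn_deriv.pow 2).add (hsol.continuousOn.pow 2)).mono hsub)
    (fun t ht => hsol.hasDerivAt_energy (ha.trans ht.1)) hbound
  have hEa : deriv u a ^ 2 + u a ^ 2 ≤ 0 := by simpa [hub, hub'] using hE
  nlinarith [sq_nonneg (deriv u a), sq_nonneg (u a)]

end SolvesRadialEq

open MeasureTheory in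
theorem nonvanishing_imaginary_frequency_general
    (n : ℕ) (κ : ℝ) (hκ : 0 < κ)
    (q : ℝ → ℝ) (hq : Continuous q) (hq1 : ∀ r, -1 < q r)
    (u : ℝ → ℝ)
    (hu : ∀ r ∈ Set.Ioi (0:ℝ), DifferentiableAt ℝ u r)
    (hu' : ∀ r ∈ Set.Ioi (0:ℝ), DifferentiableAt ℝ (deriv u) r)
    (hode : ∀ r ∈ Set.Ioi (0:ℝ),
      deriv (deriv u) r + (1/r)*deriv u r - κ^2*(1+q r)*u r - ((n:ℝ)^2/r^2)*u r = 0)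
    (hint : ∀ r > 0, IntegrableOn
      (fun x => x*(deriv u x)^2 + (κ^2*(1+q x) + (n:ℝ)^2/x^2)*x*(u x)^2) (Set.Ioi r))
    (hdecay : Filter.Tendsto (fun r : ℝ => r * u r * deriv u r) Filter.atTop (nhds 0))
    (hnontriv : ∃ r > 0, u r ≠ 0) :
    ∀ r : ℝ, 0 < r →
      r * u r * deriv u r
        = -∫ x in Set.Ioi r, (x*(deriv u x)^2 + (κ^2*(1+q x) + (n:ℝ)^2/x^2)*x*(u x)^2)
      ∧ u r ≠ 0 := by
  have hsol : SolvesRadialEq (fun x => κ^2*(1+q x) + (n:ℝ)^2/x^2) u :=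
    fun r hr => ⟨hu r hr, hu' r hr, by linear_combination hode r hr⟩
  have hV : ContinuousOn (fun x : ℝ => κ^2*(1+q x) + (n:ℝ)^2/x^2) (Ioi 0) :=
    (continuous_const.mul (continuous_const.add hq)).continuousOn.add
      (continuousOn_const.div (continuousOn_pow 2) fun x hx => pow_ne_zero 2 (ne_of_gt hx))
  have hVpos : ∀ x > 0, 0 < κ^2*(1+q x) + (n:ℝ)^2/x^2 := fun x _ =>
    add_pos_of_pos_of_nonneg (mul_pos (pow_pos hκ 2) (by linarith [hq1 x])) (by positivity)
  intro r hr
  refine ⟨hsol.mul_mul_deriv_eq_neg_integral_Ioi hr (hint r hr) hdecay, fun hur => ?_⟩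
  have hvanish : ∀ ⦃x⦄, r < x → u x = 0 ∧ deriv u x = 0 :=
    fun _ hx => hsol.eq_zero_of_lt hV hVpos hr (hint r hr) hdecay hur hx
  obtain ⟨r₁, hr₁, hur₁⟩ := hnontriv
  rcases lt_or_ge r r₁ with hlt | hle
  · exact hur₁ (hvanish hlt).1
  · have hlt : r < r + 1 := lt_add_one r
    exact hur₁ (hsol.eq_zero_of_eq_zero_of_deriv_eq_zero hV hr₁ (hle.trans hlt.le)
      (hvanish hlt).1 (hvanish hlt).2)

open MeasureTheory in
/-- For `k = iκ` with `κ > 0`, a nontrivial real decaying solution `u` of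
`u'' + u'/r - κ²(1+q)u - (n²/r²)u = 0` satisfies
`r u(r) u'(r) = -∫_r^∞ [x u'(x)² + (κ²(1+q)+n²/x²) x u(x)²] dx`, hence `u(r) ≠ 0` for `r > 0`. -/
theorem nonvanishing_imaginary_frequency
    (n : ℕ) (κ : ℝ) (hκ : 0 < κ)
    (q : ℝ → ℝ) (hq : Continuous q) (hq1 : ∀ r, -1 < q r)
    (hqsupp : HasCompactSupport q)
    (u : ℝ → ℝ)
    (hu : ∀ r ∈ Set.Ioi (0:ℝ), DifferentiableAt ℝ u r)
    (hu' : ∀ r ∈ Set.Ioi (0:ℝ), DifferentiableAt ℝ (deriv u) r)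
    (hode : ∀ r ∈ Set.Ioi (0:ℝ),
      deriv (deriv u) r + (1/r)*deriv u r - κ^2*(1+q r)*u r - ((n:ℝ)^2/r^2)*u r = 0)
    (hint : ∀ r > 0, IntegrableOn
      (fun x => x*(deriv u x)^2 + (κ^2*(1+q x) + (n:ℝ)^2/x^2)*x*(u x)^2) (Set.Ioi r))
    (hdecay : Filter.Tendsto (fun r : ℝ => r * u r * deriv u r) Filter.atTop (nhds 0))
    (hnontriv : ∃ r > 0, u r ≠ 0) :
    ∀ r : ℝ, 0 < r →
      r * u r * deriv u r
        = -∫ x in Set.Ioi r, (x*(deriv u x)^2 + (κ^2*(1+q x) + (n:ℝ)^2/x^2)*x*(u x)^2)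
      ∧ u r ≠ 0 :=
  nonvanishing_imaginary_frequency_general n κ hκ q hq hq1 u hu hu' hode hint hdecay hnontriv
end
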